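/- arXiv:math/0104077 — 2 statements merged into one kernel-verified Lean document; each statement's English description precedes it below -/
import Mathlib

section
/- Let n ≥ 1 and let j : ℤ^n → ℝ be a nonzero additive group homomorphism. Then there exists a ℤ-basis b_1, …, b_n of ℤ^n (equivalently, a matrix A ∈ GL(n, ℤ) whose columns are the b_i) such that j(b_i) > 0 for every i = 1, …, n. -/
/-!
Pick a basis vector `b k` with `j (b k) ≠ 0`; negating the whole basis if necessary, `j (b k) > 0`.
By the Archimedean property there are integers `c i` with `j (b i) + c i • j (b k) > 0`, and
the transvection `x ↦ x + φ x • b k` with `φ (b i) = c i`, `φ (b k) = 0` carries `b` to a basis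
on which `j` is positive.
-/

namespace Module.Basis

variable {ι M G : Type*} [AddCommGroup M] [AddCommGroup G]

theorem exists_apply_ne_zero_of_ne_zero (b : Basis ι ℤ M) {j : M →+ G} (hj : j ≠ 0) :
    ∃ k, j (b k) ≠ 0 := by
  by_contra! h
  exact hj <| AddMonoidHom.toIntLinearMap_injective <| b.ext fun i => by simp [h i]

variable [LinearOrder G] [IsOrderedAddMonoid G]

theorem exists_basis_pos_apply_of_ne_zero (b : Basis ι ℤ M) {j : M →+ G} {k : ι}
    (hk : j (b k) ≠ 0) : ∃ b' : Basis ι ℤ M, 0 < j (b' k) := by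
  rcases hk.lt_or_gt with hneg | hpos
  · exact ⟨b.map (LinearEquiv.neg ℤ), by simpa [map_apply] using hneg⟩
  · exact ⟨b, hpos⟩

theorem exists_basis_forall_pos_apply_of_pos [Archimedean G] (b : Basis ι ℤ M) {j : M →+ G}
    {k : ι} (hk : 0 < j (b k)) : ∃ b' : Basis ι ℤ M, ∀ i, 0 < j (b' i) := by
  classical
  have hN : ∀ i, ∃ N : ℕ, -j (b i) < N • j (b k) := fun i => by
    obtain ⟨N, hle⟩ := Archimedean.arch (-j (b i)) hk
    exact ⟨N + 1, by rw [succ_nsmul]; exact hle.trans_lt (lt_add_of_pos_right _ hk)⟩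
  choose N hN using hN
  let c : ι → ℤ := Function.update (fun i => (N i : ℤ)) k 0
  have hφ : b.constr ℤ c (b k) = 0 := by simp [c]
  refine ⟨b.map (LinearEquiv.transvection hφ), fun i => ?_⟩
  simp only [map_apply, LinearEquiv.transvection.apply, constr_basis, map_add, map_zsmul]
  by_cases hik : i = k
  · subst hik
    simpa [c] using hk
  · simpa only [c, Function.update_of_ne hik, natCast_zsmul] using neg_lt_iff_pos_add'.mp (hN i)

theorem exists_basis_forall_pos_apply [Archimedean G] (b : Basis ι ℤ M) {j : M →+ G}
    (hj : j ≠ 0) : ∃ b' : Basis ι ℤ M, ∀ i, 0 < j (b' i) := by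
  obtain ⟨k, hk⟩ := b.exists_apply_ne_zero_of_ne_zero hj
  obtain ⟨b', hb'⟩ := b.exists_basis_pos_apply_of_ne_zero hk
  exact b'.exists_basis_forall_pos_apply_of_pos hb'

end Module.Basis

theorem stmt_1_general (n : ℕ) (j : (Fin n → ℤ) →+ ℝ) (hj : j ≠ 0) :
    ∃ b : Module.Basis (Fin n) ℤ (Fin n → ℤ), ∀ i : Fin n, 0 < j (b i) :=
  (Pi.basisFun ℤ (Fin n)).exists_basis_forall_pos_apply hj

/-- Any nonzero additive homomorphism `j : ℤⁿ → ℝ` admits a `ℤ`-basis of `ℤⁿ`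
on which `j` takes only positive values. -/
theorem stmt_1 (n : ℕ) (hn : 1 ≤ n) (j : (Fin n → ℤ) →+ ℝ) (hj : j ≠ 0) :
    ∃ b : Module.Basis (Fin n) ℤ (Fin n → ℤ), ∀ i : Fin n, 0 < j (b i) :=
  stmt_1_general n j hj
end

section
/- Let n ≥ 1 and let j : ℤ^n → ℝ be a nonzero additive group homomorphism. Then there exist a ℤ-basis b_1, …, b_n of ℤ^n and a real number c > 0 such that c · j(b_1) = 1 and c · j(b_i) > 0 for every i = 2, …, n. In other words, up to a positive rescaling of ℝ and a change of ℤ-basis, j is given by j(e_1) = 1, j(e_2) = θ_1, …, j(e_n) = θ_{n-1} with all θ_i positive reals. -/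
/-!
Some basis vector `e k` has `j (e k) ≠ 0`. Replacing each `e i` by `± e i` makes every value
`j (e i)` nonnegative, and then the transvection adding `e k` to every other basis vector makes
all values strictly positive; dividing by the value at the first vector gives the normal form.
-/

namespace Module.Basis

variable {ι R M : Type*} [Ring R] [AddCommGroup M] [Module R M]

theorem exists_basis_apply_eq_add (e : Basis ι R M) (k : ι) :
    ∃ b : Basis ι R M, b k = e k ∧ ∀ i ≠ k, b i = e i + e k := by
  classical
  set φ : Dual R M :=
    Finsupp.linearCombination R (fun i => if i = k then (0 : R) else 1) ∘ₗ e.repr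
  have hφ : ∀ i, φ (e i) = if i = k then 0 else 1 := fun i => by
    simp [φ, Finsupp.linearCombination_single]
  have hφk : φ (e k) = 0 := by simp [hφ]
  exact ⟨e.map (LinearEquiv.transvection hφk), by simp [LinearMap.transvection.apply, hφk],
    fun i hi => by simp [LinearMap.transvection.apply, hφ, hi]⟩

variable {G : Type*} [AddCommGroup G] [LinearOrder G] [IsOrderedAddMonoid G]

theorem exists_basis_map_apply_eq_abs (e : Basis ι R M) (j : M →+ G) :
    ∃ b : Basis ι R M, ∀ i, j (b i) = |j (e i)| := by
  classical
  let sign : ι → Rˣ := fun i => if 0 ≤ j (e i) then 1 else -1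
  refine ⟨e.unitsSMul sign, fun i => ?_⟩
  rw [unitsSMul_apply]
  by_cases h : 0 ≤ j (e i)
  · simp [sign, h, abs_of_nonneg h]
  · simp [sign, h, abs_of_neg (not_le.1 h)]

theorem exists_basis_map_apply_pos {M : Type*} [AddCommGroup M] (e : Basis ι ℤ M)
    (j : M →+ G) (hj : j ≠ 0) : ∃ b : Basis ι ℤ M, ∀ i, 0 < j (b i) := by
  obtain ⟨k, hk⟩ : ∃ k, j (e k) ≠ 0 := by
    by_contra! h
    exact hj (AddMonoidHom.toIntLinearMap_injective (e.ext fun i => h i))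
  obtain ⟨e', he'⟩ := e.exists_basis_map_apply_eq_abs j
  obtain ⟨b, hbk, hb⟩ := e'.exists_basis_apply_eq_add k
  have hk' : 0 < |j (e k)| := abs_pos.2 hk
  refine ⟨b, fun i => ?_⟩
  rcases eq_or_ne i k with rfl | hi
  · rwa [hbk, he']
  · rw [hb i hi, map_add, he', he']
    exact add_pos_of_nonneg_of_pos (abs_nonneg _) hk'

end Module.Basis

/-- Any nonzero additive homomorphism `j : ℤⁿ → ℝ` admits, after a positive
rescaling `c` of `ℝ` and a change of `ℤ`-basis of `ℤⁿ`, the normal form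
`j(b₁) = 1`, `j(bᵢ) = θᵢ > 0` for `i = 2, …, n`. -/
theorem stmt_2 (n : ℕ) (hn : 1 ≤ n) (j : (Fin n → ℤ) →+ ℝ) (hj : j ≠ 0) :
    ∃ (b : Module.Basis (Fin n) ℤ (Fin n → ℤ)) (c : ℝ), 0 < c ∧
      c * j (b ⟨0, hn⟩) = 1 ∧
      ∀ i : Fin n, i ≠ ⟨0, hn⟩ → 0 < c * j (b i) := by
  obtain ⟨b, hb⟩ := (Pi.basisFun ℤ (Fin n)).exists_basis_map_apply_pos j hj
  have hb₀ := hb ⟨0, hn⟩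
  exact ⟨b, (j (b ⟨0, hn⟩))⁻¹, inv_pos.2 hb₀, inv_mul_cancel₀ hb₀.ne',
    fun i _ => mul_pos (inv_pos.2 hb₀) (hb i)⟩
end
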